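/- arXiv:1510.00864 — 6 statements merged into one kernel-verified Lean document; each statement's English description precedes it below -/
import Mathlib

section
/- Let N ≥ 1, let A ∈ ℂ^{N,N}, let b ∈ ℝ with b > −1, and let γ_A > 0. Then the following two statements are equivalent: (i) |z|²·Re⟨w,Aw⟩ + b·Re⟨w,z⟩·Re⟨z,Aw⟩ ≥ γ_A·|z|²·|w|² for all w, z ∈ ℂ^N; (ii) (1 + b/2)·Re⟨w,Aw⟩ − (|b|/2)·|Aw| ≥ γ_A for all w ∈ ℂ^N with |w| = 1. -/
/-!
For unit vectors `w, z` and `u = A w`, write `2 ⟪w, z⟫ ⟪z, u⟫ - ⟪w, u⟫ = ⟪w, 2 ⟪z, u⟫ z - u⟫`, the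
pairing of `w` with the reflection of `u` in the line `ℝ z`. Hence it lies in `[-‖u‖, ‖u‖]`, and
both ends are attained, at `z` parallel to `‖u‖ w ∓ u` (or at `z = i w` when that vector
vanishes). So, after normalising `w` and `z` by homogeneity, the infimum over `z` of the left side
of (i) is exactly the left side of (ii).
-/

/-- The action of a complex `N × N` matrix on `EuclideanSpace ℂ (Fin N)`. -/
noncomputable def mulE {N : ℕ} (A : Matrix (Fin N) (Fin N) ℂ)
    (w : EuclideanSpace ℂ (Fin N)) : EuclideanSpace ℂ (Fin N) :=
  Matrix.toEuclideanLin A w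

open scoped RealInnerProductSpace

section RealInnerProductSpace

variable {F : Type*} [NormedAddCommGroup F] [InnerProductSpace ℝ F]

theorem abs_two_inner_mul_inner_sub_inner_le {w z : F} (hw : ‖w‖ = 1) (hz : ‖z‖ = 1) (u : F) :
    |2 * ⟪w, z⟫ * ⟪z, u⟫ - ⟪w, u⟫| ≤ ‖u‖ := by
  have h_pair : 2 * ⟪w, z⟫ * ⟪z, u⟫ - ⟪w, u⟫ = ⟪w, (2 * ⟪z, u⟫) • z - u⟫ := by
    rw [inner_sub_right, real_inner_smul_right]; ring
  have h_refl : ‖(2 * ⟪z, u⟫) • z - u‖ = ‖u‖ := by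
    refine (sq_eq_sq₀ (norm_nonneg _) (norm_nonneg _)).mp ?_
    rw [norm_sub_sq_real, real_inner_smul_left, norm_smul, Real.norm_eq_abs, hz, mul_one,
      sq_abs]
    ring
  calc |2 * ⟪w, z⟫ * ⟪z, u⟫ - ⟪w, u⟫| ≤ ‖w‖ * ‖(2 * ⟪z, u⟫) • z - u‖ := by
        rw [h_pair]; exact abs_real_inner_le_norm _ _
    _ = ‖u‖ := by rw [hw, h_refl, one_mul]

theorem exists_two_inner_mul_inner_sub_inner_eq_neg_norm {w v : F} (hw : ‖w‖ = 1)
    (hv : ‖v‖ = 1) (hwv : ⟪w, v⟫ = 0) (u : F) :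
    ∃ z : F, ‖z‖ = 1 ∧ 2 * ⟪w, z⟫ * ⟪z, u⟫ - ⟪w, u⟫ = -‖u‖ := by
  have hww : ⟪w, w⟫ = 1 := by rw [real_inner_self_eq_norm_sq, hw, one_pow]
  set d : F := ‖u‖ • w - u
  have hwd : ⟪w, d⟫ = ‖u‖ - ⟪w, u⟫ := by
    rw [inner_sub_right, real_inner_smul_right, hww, mul_one]
  have hdu : ⟪d, u⟫ = -‖u‖ * (‖u‖ - ⟪w, u⟫) := by
    rw [inner_sub_left, real_inner_smul_left, real_inner_self_eq_norm_sq]; ring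
  have hdd : ‖d‖ ^ 2 = 2 * ‖u‖ * (‖u‖ - ⟪w, u⟫) := by
    rw [norm_sub_sq_real, real_inner_smul_left, norm_smul, Real.norm_of_nonneg (norm_nonneg u),
      hw]
    ring
  by_cases hd : d = 0
  · refine ⟨v, hv, ?_⟩
    rw [hd, inner_zero_right] at hwd
    rw [hwv]; linarith
  · have hdd_ne : 2 * ‖u‖ * (‖u‖ - ⟪w, u⟫) ≠ 0 := hdd ▸ pow_ne_zero 2 (norm_ne_zero_iff.mpr hd)
    have hu : ‖u‖ ≠ 0 := right_ne_zero_of_mul (left_ne_zero_of_mul hdd_ne)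
    refine ⟨‖d‖⁻¹ • d, norm_smul_inv_norm hd, ?_⟩
    calc 2 * ⟪w, ‖d‖⁻¹ • d⟫ * ⟪‖d‖⁻¹ • d, u⟫ - ⟪w, u⟫
        = 2 * ⟪w, d⟫ * ⟪d, u⟫ / ‖d‖ ^ 2 - ⟪w, u⟫ := by
          rw [real_inner_smul_right, real_inner_smul_left]; ring
      _ = -‖u‖ := by
          rw [hwd, hdu, hdd]; field_simp; ring

theorem forall_unit_le_inner_add_mul_iff {w v : F} (hw : ‖w‖ = 1) (hv : ‖v‖ = 1)
    (hwv : ⟪w, v⟫ = 0) (u : F) (b γ : ℝ) :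
    (∀ z : F, ‖z‖ = 1 → γ ≤ ⟪w, u⟫ + b * (⟪w, z⟫ * ⟪z, u⟫)) ↔
      γ ≤ (1 + b / 2) * ⟪w, u⟫ - |b| / 2 * ‖u‖ := by
  have h_split (z : F) : ⟪w, u⟫ + b * (⟪w, z⟫ * ⟪z, u⟫) =
      (1 + b / 2) * ⟪w, u⟫ + b / 2 * (2 * ⟪w, z⟫ * ⟪z, u⟫ - ⟪w, u⟫) := by ring
  constructor
  · intro h
    rcases le_or_gt 0 b with hb | hb
    · obtain ⟨z, hz, hz_eq⟩ := exists_two_inner_mul_inner_sub_inner_eq_neg_norm hw hv hwv u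
      have := h z hz
      rw [h_split, hz_eq] at this
      rw [abs_of_nonneg hb]; linarith
    · obtain ⟨z, hz, hz_eq⟩ := exists_two_inner_mul_inner_sub_inner_eq_neg_norm hw hv hwv (-u)
      rw [inner_neg_right, inner_neg_right, norm_neg] at hz_eq
      have hz_eq' : 2 * ⟪w, z⟫ * ⟪z, u⟫ - ⟪w, u⟫ = ‖u‖ := by linarith
      have := h z hz
      rw [h_split, hz_eq'] at this
      rw [abs_of_neg hb]; linarith
  · intro h z hz
    rw [h_split]
    have h_abs := abs_two_inner_mul_inner_sub_inner_le hw hz u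
    have h_err : |b / 2 * (2 * ⟪w, z⟫ * ⟪z, u⟫ - ⟪w, u⟫)| ≤ |b| / 2 * ‖u‖ := by
      rw [abs_mul, abs_div, abs_two]; gcongr
    linarith [neg_abs_le (b / 2 * (2 * ⟪w, z⟫ * ⟪z, u⟫ - ⟪w, u⟫))]

theorem exists_norm_eq_one_smul_eq {x : F} (hx : x ≠ 0) : ∃ (a : ℝ) (y : F), ‖y‖ = 1 ∧ a • y = x :=
  ⟨‖x‖, ‖x‖⁻¹ • x, norm_smul_inv_norm hx, smul_inv_smul₀ (norm_ne_zero_iff.mpr hx) x⟩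

theorem forall_le_iff_forall_unit_le (T : F →ₗ[ℝ] F) (b γ : ℝ) :
    (∀ w z : F, γ * (‖z‖ ^ 2 * ‖w‖ ^ 2) ≤ ‖z‖ ^ 2 * ⟪w, T w⟫ + b * (⟪w, z⟫ * ⟪z, T w⟫)) ↔
      ∀ w z : F, ‖w‖ = 1 → ‖z‖ = 1 → γ ≤ ⟪w, T w⟫ + b * (⟪w, z⟫ * ⟪z, T w⟫) := by
  constructor
  · intro h w z hw hz
    simpa [hw, hz] using h w z
  · intro h w z
    rcases eq_or_ne w 0 with rfl | hw
    · simp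
    rcases eq_or_ne z 0 with rfl | hz
    · simp
    obtain ⟨a, w, hw₁, rfl⟩ := exists_norm_eq_one_smul_eq hw
    obtain ⟨c, z, hz₁, rfl⟩ := exists_norm_eq_one_smul_eq hz
    have h_scale : ‖c • z‖ ^ 2 * ⟪a • w, T (a • w)⟫ + b * (⟪a • w, c • z⟫ * ⟪c • z, T (a • w)⟫)
        = (a * c) ^ 2 * (⟪w, T w⟫ + b * (⟪w, z⟫ * ⟪z, T w⟫)) := by
      simp only [map_smul, norm_smul, real_inner_smul_left, real_inner_smul_right, hz₁,
        Real.norm_eq_abs, mul_one, sq_abs]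
      ring
    have h_norms : ‖c • z‖ ^ 2 * ‖a • w‖ ^ 2 = (a * c) ^ 2 := by
      rw [norm_smul, norm_smul, hw₁, hz₁, Real.norm_eq_abs, Real.norm_eq_abs, mul_pow, mul_pow,
        sq_abs, sq_abs]
      ring
    rw [h_scale, h_norms, mul_comm]
    exact mul_le_mul_of_nonneg_left (h w z hw₁ hz₁) (sq_nonneg _)

end RealInnerProductSpace

theorem EuclideanSpace.re_inner_eq_real_inner {N : ℕ} (x y : EuclideanSpace ℂ (Fin N)) :
    (inner ℂ x y : ℂ).re = ⟪x, y⟫ := by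
  simp [PiLp.inner_apply, Complex.inner, Complex.re_sum]

theorem EuclideanSpace.real_inner_I_smul_self {N : ℕ} (x : EuclideanSpace ℂ (Fin N)) :
    ⟪x, Complex.I • x⟫ = 0 := by
  rw [← EuclideanSpace.re_inner_eq_real_inner, inner_smul_right, inner_self_eq_norm_sq_to_K]
  simp [← Complex.ofReal_pow]

theorem stmt_3_general {N : ℕ} (A : Matrix (Fin N) (Fin N) ℂ) (b : ℝ) (γ_A : ℝ) :
    (∀ w z : EuclideanSpace ℂ (Fin N),
      ‖z‖ ^ 2 * (inner ℂ w (mulE A w) : ℂ).re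
        + b * ((inner ℂ w z : ℂ).re * (inner ℂ z (mulE A w) : ℂ).re)
        ≥ γ_A * (‖z‖ ^ 2 * ‖w‖ ^ 2))
    ↔ (∀ w : EuclideanSpace ℂ (Fin N), ‖w‖ = 1 →
      (1 + b / 2) * (inner ℂ w (mulE A w) : ℂ).re - (|b| / 2) * ‖mulE A w‖ ≥ γ_A) := by
  simp only [EuclideanSpace.re_inner_eq_real_inner, ge_iff_le]
  refine (forall_le_iff_forall_unit_le ((Matrix.toEuclideanLin A).restrictScalars ℝ) b γ_A).trans
    <| forall_congr' fun w => forall_comm.trans (forall_congr' fun hw => ?_)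
  have hIw : ‖Complex.I • w‖ = 1 := by rw [norm_smul, Complex.norm_I, hw, one_mul]
  exact forall_unit_le_inner_add_mul_iff hw hIw (EuclideanSpace.real_inner_I_smul_self w) _ b γ_A

/-- Equivalence of the two forms of the `L^p`-dissipativity condition for complex matrices. -/
theorem stmt_3 {N : ℕ} (hN : 1 ≤ N) (A : Matrix (Fin N) (Fin N) ℂ) (b : ℝ)
    (hb : -1 < b) (γ_A : ℝ) (hγ : 0 < γ_A) :
    (∀ w z : EuclideanSpace ℂ (Fin N),
      ‖z‖ ^ 2 * (inner ℂ w (mulE A w) : ℂ).re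
        + b * ((inner ℂ w z : ℂ).re * (inner ℂ z (mulE A w) : ℂ).re)
        ≥ γ_A * (‖z‖ ^ 2 * ‖w‖ ^ 2))
    ↔ (∀ w : EuclideanSpace ℂ (Fin N), ‖w‖ = 1 →
      (1 + b / 2) * (inner ℂ w (mulE A w) : ℂ).re - (|b| / 2) * ‖mulE A w‖ ≥ γ_A) :=
  stmt_3_general A b γ_A
end

section
/- Let N ≥ 1, let A ∈ ℂ^{N,N}, and let b ∈ ℝ with b > −1. Then the following two statements are equivalent: (i) there exists γ_A > 0 such that (1 + b/2)·Re⟨w,Aw⟩ − (|b|/2)·|Aw| ≥ γ_A for all w ∈ ℂ^N with |w| = 1; (ii) A is invertible and μ₁(A) > |b|/(2+b). -/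
/-- The first antieigenvalue `μ₁(A)` of a complex matrix `A`:
`μ₁(A) = inf { Re⟨w, Aw⟩ / (|w|·|Aw|) : w ≠ 0, Aw ≠ 0 }`. -/
noncomputable def mu1 {N : ℕ} (A : Matrix (Fin N) (Fin N) ℂ) : ℝ :=
  sInf { x : ℝ | ∃ w : EuclideanSpace ℂ (Fin N), w ≠ 0 ∧ mulE A w ≠ 0 ∧
    x = (inner ℂ w (mulE A w) : ℂ).re / (‖w‖ * ‖mulE A w‖) }

section AntieigenvalueRatios

open RCLike

variable {𝕜 E : Type*} [RCLike 𝕜] [NormedAddCommGroup E] [InnerProductSpace 𝕜 E]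

def antieigenvalueRatios (T : E →ₗ[𝕜] E) : Set ℝ :=
  {x | ∃ w, w ≠ 0 ∧ T w ≠ 0 ∧ x = re (inner 𝕜 w (T w)) / (‖w‖ * ‖T w‖)}

lemma antieigenvalueRatios_eq_sphere (T : E →ₗ[𝕜] E) :
    antieigenvalueRatios T =
      {x | ∃ u, ‖u‖ = 1 ∧ T u ≠ 0 ∧ x = re (inner 𝕜 u (T u)) / ‖T u‖} := by
  ext x
  constructor
  · rintro ⟨w, hw, hTw, rfl⟩
    refine ⟨(‖w‖⁻¹ : 𝕜) • w, norm_smul_inv_norm hw, by simp [hw, hTw], ?_⟩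
    simp only [map_smul, inner_smul_left, inner_smul_right, norm_smul, ← ofReal_inv,
      conj_ofReal, ← mul_assoc, ← ofReal_mul, re_ofReal_mul, norm_ofReal, abs_inv, abs_norm]
    field_simp
  · rintro ⟨u, hu, hTu, rfl⟩
    exact ⟨u, norm_ne_zero_iff.mp (by simp [hu]), hTu, by rw [hu, one_mul]⟩

lemma neg_one_le_of_mem_antieigenvalueRatios {T : E →ₗ[𝕜] E} {x : ℝ}
    (hx : x ∈ antieigenvalueRatios T) : -1 ≤ x := by
  rw [antieigenvalueRatios_eq_sphere] at hx
  obtain ⟨u, hu, hTu, rfl⟩ := hx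
  rw [le_div_iff₀ (norm_pos_iff.mpr hTu)]
  have := re_inner_le_norm (𝕜 := 𝕜) u (-T u)
  rw [inner_neg_right, map_neg, norm_neg, hu] at this
  linarith

lemma bddBelow_antieigenvalueRatios (T : E →ₗ[𝕜] E) : BddBelow (antieigenvalueRatios T) :=
  ⟨-1, fun _ => neg_one_le_of_mem_antieigenvalueRatios⟩

variable [FiniteDimensional 𝕜 E]

lemma injective_and_lt_sInf_antieigenvalueRatios [Nontrivial E] {T : E →ₗ[𝕜] E} {c δ : ℝ} (hδ : 0 < δ)
    (h : ∀ u : E, ‖u‖ = 1 → δ ≤ re (inner 𝕜 u (T u)) - c * ‖T u‖) :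
    Function.Injective T ∧ c < sInf (antieigenvalueRatios T) := by
  have hTu : ∀ u : E, ‖u‖ = 1 → T u ≠ 0 := fun u hu hTu => by
    simpa [hTu] using (hδ.trans_le (h u hu)).ne'
  have hT : Function.Injective T := by
    refine (injective_iff_map_eq_zero T).mpr fun w hTw => by_contra fun hw => ?_
    exact hTu _ (norm_smul_inv_norm hw) (by rw [map_smul, hTw, smul_zero])
  obtain ⟨M, hM, hTM⟩ := (LinearMap.toContinuousLinearMap T).bound
  obtain ⟨w, hw⟩ := exists_ne (0 : E)
  have hne : (antieigenvalueRatios T).Nonempty :=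
    ⟨_, w, hw, fun h0 => hw (hT (h0.trans (map_zero T).symm)), rfl⟩
  have hbound : ∀ x ∈ antieigenvalueRatios T, c + δ / M ≤ x := by
    rw [antieigenvalueRatios_eq_sphere]
    rintro x ⟨u, hu, hTu0, rfl⟩
    have hTuM : ‖T u‖ ≤ M := by simpa [hu] using hTM u
    have hpos : 0 < ‖T u‖ := norm_pos_iff.mpr hTu0
    rw [le_div_iff₀ hpos, add_mul, div_mul_eq_mul_div]
    have : δ * ‖T u‖ / M ≤ δ := by rw [div_le_iff₀ hM]; exact mul_le_mul_of_nonneg_left hTuM hδ.le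
    linarith [h u hu]
  exact ⟨hT, (lt_add_of_pos_right c (div_pos hδ hM)).trans_le (le_csInf hne hbound)⟩

lemma exists_le_re_inner_sub_of_lt_sInf {T : E →ₗ[𝕜] E} {c : ℝ} (hT : Function.Injective T)
    (hc : c < sInf (antieigenvalueRatios T)) :
    ∃ δ > 0, ∀ u : E, ‖u‖ = 1 → δ ≤ re (inner 𝕜 u (T u)) - c * ‖T u‖ := by
  obtain ⟨K, -, hK⟩ := (LinearMap.injective_iff_antilipschitz T).mp hT
  obtain ⟨ε, hε, hεT⟩ := antilipschitzWith_iff_exists_mul_le_norm.mp ⟨K, hK⟩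
  set μ := sInf (antieigenvalueRatios T)
  refine ⟨(μ - c) * ε, mul_pos (sub_pos.mpr hc) hε, fun u hu => ?_⟩
  have hεu : ε ≤ ‖T u‖ := by simpa [hu] using hεT u
  have hTu : T u ≠ 0 := norm_pos_iff.mp (hε.trans_le hεu)
  have hμ : μ ≤ re (inner 𝕜 u (T u)) / ‖T u‖ :=
    csInf_le (bddBelow_antieigenvalueRatios T)
      (by rw [antieigenvalueRatios_eq_sphere]; exact ⟨u, hu, hTu, rfl⟩)
  rw [le_div_iff₀ (hε.trans_le hεu)] at hμ
  nlinarith [mul_le_mul_of_nonneg_left hεu (sub_pos.mpr hc).le]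

theorem exists_le_re_inner_sub_iff [Nontrivial E] (T : E →ₗ[𝕜] E) (c : ℝ) :
    (∃ δ > 0, ∀ u : E, ‖u‖ = 1 → δ ≤ re (inner 𝕜 u (T u)) - c * ‖T u‖) ↔
      Function.Injective T ∧ c < sInf (antieigenvalueRatios T) :=
  ⟨fun ⟨_, hδ, h⟩ => injective_and_lt_sInf_antieigenvalueRatios hδ h,
    fun ⟨hT, hc⟩ => exists_le_re_inner_sub_of_lt_sInf hT hc⟩

end AntieigenvalueRatios

lemma Matrix.injective_toEuclideanLin_iff_isUnit {n 𝕜 : Type*} [Fintype n] [DecidableEq n]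
    [RCLike 𝕜] {A : Matrix n n 𝕜} :
    Function.Injective (Matrix.toEuclideanLin A) ↔ IsUnit A := by
  rw [← Matrix.mulVec_injective_iff_isUnit]
  change Function.Injective (WithLp.toLp 2 ∘ A.mulVec ∘ WithLp.ofLp) ↔ _
  rw [(WithLp.toLp_injective 2).of_comp_iff,
    Function.Injective.of_comp_iff' _ (WithLp.ofLp_bijective 2)]

lemma mu1_eq_sInf_antieigenvalueRatios {N : ℕ} (A : Matrix (Fin N) (Fin N) ℂ) :
    mu1 A = sInf (antieigenvalueRatios (Matrix.toEuclideanLin A)) :=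
  rfl

lemma exists_pos_le_mul_iff {α : Type*} {p : α → Prop} {f : α → ℝ} {κ : ℝ} (hκ : 0 < κ) :
    (∃ γ > 0, ∀ a, p a → γ ≤ κ * f a) ↔ ∃ δ > 0, ∀ a, p a → δ ≤ f a := by
  constructor
  · rintro ⟨γ, hγ, h⟩
    exact ⟨γ / κ, div_pos hγ hκ, fun a ha => (div_le_iff₀' hκ).mpr (h a ha)⟩
  · rintro ⟨δ, hδ, h⟩
    exact ⟨κ * δ, mul_pos hκ hδ, fun a ha => mul_le_mul_of_nonneg_left (h a ha) hκ.le⟩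

/-- The unit-vector form of the `L^p`-dissipativity condition is equivalent to the
antieigenvalue condition, for complex matrices. -/
theorem stmt_5 {N : ℕ} (hN : 1 ≤ N) (A : Matrix (Fin N) (Fin N) ℂ) (b : ℝ)
    (hb : -1 < b) :
    (∃ γ_A : ℝ, 0 < γ_A ∧ ∀ w : EuclideanSpace ℂ (Fin N), ‖w‖ = 1 →
      (1 + b / 2) * (inner ℂ w (mulE A w) : ℂ).re - (|b| / 2) * ‖mulE A w‖ ≥ γ_A)
    ↔ (IsUnit A ∧ mu1 A > |b| / (2 + b)) := by
  have : NeZero N := ⟨by omega⟩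
  have hκ : 0 < 1 + b / 2 := by linarith
  have hcoef : |b| / 2 = (1 + b / 2) * (|b| / (2 + b)) := by
    have : 2 + b ≠ 0 := by linarith
    field_simp
  simp_rw [hcoef, mul_assoc, ← mul_sub]
  refine (exists_pos_le_mul_iff hκ).trans ?_
  rw [← Matrix.injective_toEuclideanLin_iff_isUnit, mu1_eq_sInf_antieigenvalueRatios]
  exact exists_le_re_inner_sub_iff (Matrix.toEuclideanLin A) _
end

section
/- Let N ≥ 1, let A ∈ ℂ^{N,N}, let b ∈ ℝ with b > −1, and let γ_A > 0. If (1 + b/2)·Re⟨w,Aw⟩ − (|b|/2)·|Aw| ≥ γ_A for all w ∈ ℂ^N with |w| = 1, then every eigenvalue λ of A satisfies Re λ ≥ 2γ_A/(2+b) > 0; in particular, A is invertible. -/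
/-! Testing a unit eigenvector `w`, `A w = λ w`, in the hypothesis turns it into
`(1 + b/2) Re λ - (|b|/2) |λ| ≥ γ_A`; dropping the nonpositive term gives `(1 + b/2) Re λ ≥ γ_A`,
and `1 + b/2 > 0` because `b > -1`. Invertibility follows since `0` is then not an eigenvalue. -/

theorem Module.End.exists_norm_eq_one_apply_eq_smul_of_mem_spectrum {𝕜 E : Type*} [RCLike 𝕜]
    [NormedAddCommGroup E] [NormedSpace 𝕜 E] [FiniteDimensional 𝕜 E] {f : E →ₗ[𝕜] E} {μ : 𝕜}
    (hμ : μ ∈ spectrum 𝕜 f) : ∃ w : E, ‖w‖ = 1 ∧ f w = μ • w := by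
  obtain ⟨v, hv⟩ := (Module.End.hasEigenvalue_iff_mem_spectrum.mpr hμ).exists_hasEigenvector
  have hv0 : ‖v‖ ≠ 0 := norm_ne_zero_iff.mpr hv.2
  refine ⟨(‖v‖ : 𝕜)⁻¹ • v, ?_, ?_⟩
  · simp [norm_smul, hv0]
  · rw [map_smul, hv.apply_eq_smul, smul_comm]

theorem Matrix.exists_norm_eq_one_mulE_eq_smul_of_mem_spectrum {N : ℕ}
    {A : Matrix (Fin N) (Fin N) ℂ} {μ : ℂ} (hμ : μ ∈ spectrum ℂ A) :
    ∃ w : EuclideanSpace ℂ (Fin N), ‖w‖ = 1 ∧ mulE A w = μ • w :=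
  Module.End.exists_norm_eq_one_apply_eq_smul_of_mem_spectrum
    (Matrix.spectrum_toLpLin (A := A) 2 ▸ hμ)

theorem inner_self_smul_of_norm_eq_one {𝕜 E : Type*} [RCLike 𝕜] [NormedAddCommGroup E]
    [InnerProductSpace 𝕜 E] {w : E} (hw : ‖w‖ = 1) (μ : 𝕜) : inner 𝕜 w (μ • w) = μ := by
  rw [inner_smul_right, inner_self_eq_norm_sq_to_K, hw]
  simp

theorem div_le_re_of_le_mul_re_sub_abs_mul_norm {b γ : ℝ} {μ : ℂ} (hb : 0 < 2 + b)
    (h : γ ≤ (1 + b / 2) * μ.re - (|b| / 2) * ‖μ‖) : 2 * γ / (2 + b) ≤ μ.re := by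
  have : 0 ≤ (|b| / 2) * ‖μ‖ := by positivity
  rw [div_le_iff₀ hb]
  linarith

theorem stmt_6_general {N : ℕ} (A : Matrix (Fin N) (Fin N) ℂ) (b : ℝ)
    (hb : -1 < b) (γ_A : ℝ) (hγ : 0 < γ_A)
    (h : ∀ w : EuclideanSpace ℂ (Fin N), ‖w‖ = 1 →
      (1 + b / 2) * (inner ℂ w (mulE A w) : ℂ).re - (|b| / 2) * ‖mulE A w‖ ≥ γ_A) :
    (∀ lam ∈ spectrum ℂ A, lam.re ≥ 2 * γ_A / (2 + b)) ∧
      0 < 2 * γ_A / (2 + b) ∧ IsUnit A := by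
  have h2b : 0 < 2 + b := by linarith
  have hpos : 0 < 2 * γ_A / (2 + b) := by positivity
  have hspec : ∀ lam ∈ spectrum ℂ A, lam.re ≥ 2 * γ_A / (2 + b) := by
    intro lam hlam
    obtain ⟨w, hw1, hwA⟩ := Matrix.exists_norm_eq_one_mulE_eq_smul_of_mem_spectrum hlam
    have hw := h w hw1
    rw [hwA, inner_self_smul_of_norm_eq_one hw1, norm_smul, hw1, mul_one] at hw
    exact div_le_re_of_le_mul_re_sub_abs_mul_norm h2b hw
  refine ⟨hspec, hpos, (spectrum.zero_notMem_iff ℂ).mp fun h0 => ?_⟩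
  have := hspec 0 h0
  rw [Complex.zero_re] at this
  linarith

/-- The unit-vector form of the `L^p`-dissipativity condition forces every eigenvalue of `A`
to satisfy `Re λ ≥ 2γ_A/(2+b) > 0`; in particular `A` is invertible. -/
theorem stmt_6 {N : ℕ} (hN : 1 ≤ N) (A : Matrix (Fin N) (Fin N) ℂ) (b : ℝ)
    (hb : -1 < b) (γ_A : ℝ) (hγ : 0 < γ_A)
    (h : ∀ w : EuclideanSpace ℂ (Fin N), ‖w‖ = 1 →
      (1 + b / 2) * (inner ℂ w (mulE A w) : ℂ).re - (|b| / 2) * ‖mulE A w‖ ≥ γ_A) :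
    (∀ lam ∈ spectrum ℂ A, lam.re ≥ 2 * γ_A / (2 + b)) ∧
      0 < 2 * γ_A / (2 + b) ∧ IsUnit A :=
  stmt_6_general A b hb γ_A hγ h
end

section
/- Let N ≥ 1, let A ∈ ℂ^{N,N} be invertible, let b ∈ ℝ with b ≠ 0 and b > −1, and suppose there exists δ_A > 1 such that ((2+b)/|b|)·Re⟨w,Aw⟩/(|w||Aw|) ≥ δ_A for all w ∈ ℂ^N with w ≠ 0 and Aw ≠ 0. Then, with γ_A := (|b|/2)·(δ_A − 1)/‖A⁻¹‖ > 0 (where ‖A⁻¹‖ denotes the operator norm of A⁻¹), one has (1 + b/2)·Re⟨w,Aw⟩ − (|b|/2)·|Aw| ≥ γ_A for all w ∈ ℂ^N with |w| = 1. -/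
/-- The `L²`-operator norm of a complex matrix, i.e. the norm of the induced continuous
linear endomorphism of Euclidean space. -/
noncomputable def opNorm {N : ℕ} (A : Matrix (Fin N) (Fin N) ℂ) : ℝ :=
  ‖Matrix.toEuclideanCLM (𝕜 := ℂ) A‖

/-!
At a unit vector `w` the hypothesis says `(1 + b/2) Re⟨w, Aw⟩ ≥ δ_A (|b|/2) |Aw|`, so the
left-hand side of the claim is at least `(|b|/2)(δ_A - 1) |Aw|`; and `1 = |w| ≤ ‖A⁻¹‖ |Aw|`.
-/

open Matrix

section InverseBound

variable {𝕜 n : Type*} [RCLike 𝕜] [Fintype n] [DecidableEq n]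

theorem Matrix.norm_le_norm_toEuclideanCLM_inv_mul {A : Matrix n n 𝕜} (hA : IsUnit A)
    (x : EuclideanSpace 𝕜 n) :
    ‖x‖ ≤ ‖toEuclideanCLM (𝕜 := 𝕜) A⁻¹‖ * ‖toEuclideanCLM (𝕜 := 𝕜) A x‖ :=
  calc ‖x‖ = ‖toEuclideanCLM (𝕜 := 𝕜) A⁻¹ (toEuclideanCLM (𝕜 := 𝕜) A x)‖ := by
        rw [← mul_apply_eq_comp, ← map_mul,
          nonsing_inv_mul A ((isUnit_iff_isUnit_det A).mp hA), map_one,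
          one_apply_eq_self]
    _ ≤ _ := ContinuousLinearMap.le_opNorm _ _

theorem Matrix.norm_toEuclideanCLM_inv_pos [Nonempty n] {A : Matrix n n 𝕜} (hA : IsUnit A) :
    0 < ‖toEuclideanCLM (𝕜 := 𝕜) A⁻¹‖ := by
  obtain ⟨x, hx⟩ := exists_ne (0 : EuclideanSpace 𝕜 n)
  have := (norm_pos_iff.mpr hx).trans_le (norm_le_norm_toEuclideanCLM_inv_mul hA x)
  exact pos_of_mul_pos_left this (norm_nonneg _)

end InverseBound

theorem dissipativity_gap_of_antieigenvalue_bound {b δ R a : ℝ} (hb : b ≠ 0) (ha : 0 < a)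
    (h : (2 + b) / |b| * (R / a) ≥ δ) :
    (1 + b / 2) * R - |b| / 2 * a ≥ |b| / 2 * (δ - 1) * a := by
  have hb' : 0 < |b| := abs_pos.mpr hb
  rw [ge_iff_le, div_mul_div_comm, le_div_iff₀ (by positivity)] at h
  linarith

theorem stmt_8_general {N : ℕ} (hN : 1 ≤ N) (A : Matrix (Fin N) (Fin N) ℂ)
    (hA : IsUnit A) (b : ℝ) (hb0 : b ≠ 0) (δ_A : ℝ) (hδ : 1 < δ_A)
    (h : ∀ w : EuclideanSpace ℂ (Fin N), w ≠ 0 → mulE A w ≠ 0 →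
      ((2 + b) / |b|) * ((inner ℂ w (mulE A w) : ℂ).re / (‖w‖ * ‖mulE A w‖)) ≥ δ_A) :
    0 < (|b| / 2) * (δ_A - 1) / opNorm A⁻¹ ∧
    ∀ w : EuclideanSpace ℂ (Fin N), ‖w‖ = 1 →
      (1 + b / 2) * (inner ℂ w (mulE A w) : ℂ).re - (|b| / 2) * ‖mulE A w‖
        ≥ (|b| / 2) * (δ_A - 1) / opNorm A⁻¹ := by
  have : Nonempty (Fin N) := ⟨⟨0, hN⟩⟩
  have hnorm : 0 < opNorm A⁻¹ := norm_toEuclideanCLM_inv_pos hA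
  have hb : 0 < |b| := abs_pos.mpr hb0
  have hγ : 0 < |b| / 2 * (δ_A - 1) := mul_pos (half_pos hb) (sub_pos.mpr hδ)
  refine ⟨div_pos hγ hnorm, fun w hw => ?_⟩
  have hle : 1 ≤ opNorm A⁻¹ * ‖mulE A w‖ := hw ▸ norm_le_norm_toEuclideanCLM_inv_mul hA w
  have hAw : 0 < ‖mulE A w‖ := pos_of_mul_pos_right (one_pos.trans_le hle) hnorm.le
  have hw0 : w ≠ 0 := norm_ne_zero_iff.mp (hw ▸ one_ne_zero)
  have hcos := h w hw0 (norm_pos_iff.mp hAw)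
  rw [hw, one_mul] at hcos
  calc _ ≥ |b| / 2 * (δ_A - 1) * ‖mulE A w‖ :=
        dissipativity_gap_of_antieigenvalue_bound hb0 hAw hcos
    _ ≥ _ := by
      rw [ge_iff_le, div_le_iff₀ hnorm, mul_assoc]
      exact le_mul_of_one_le_right hγ.le (by linarith)

/-- From the antieigenvalue bound back to the unit-vector form of the `L^p`-dissipativity
condition: with `γ_A := (|b|/2)·(δ_A − 1)/‖A⁻¹‖ > 0`, one has
`(1 + b/2)·Re⟨w,Aw⟩ − (|b|/2)·|Aw| ≥ γ_A` for all unit vectors `w`. -/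
theorem stmt_8 {N : ℕ} (hN : 1 ≤ N) (A : Matrix (Fin N) (Fin N) ℂ)
    (hA : IsUnit A) (b : ℝ) (hb0 : b ≠ 0) (hb1 : -1 < b) (δ_A : ℝ) (hδ : 1 < δ_A)
    (h : ∀ w : EuclideanSpace ℂ (Fin N), w ≠ 0 → mulE A w ≠ 0 →
      ((2 + b) / |b|) * ((inner ℂ w (mulE A w) : ℂ).re / (‖w‖ * ‖mulE A w‖)) ≥ δ_A) :
    0 < (|b| / 2) * (δ_A - 1) / opNorm A⁻¹ ∧
    ∀ w : EuclideanSpace ℂ (Fin N), ‖w‖ = 1 →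
      (1 + b / 2) * (inner ℂ w (mulE A w) : ℂ).re - (|b| / 2) * ‖mulE A w‖
        ≥ (|b| / 2) * (δ_A - 1) / opNorm A⁻¹ :=
  stmt_8_general hN A hA b hb0 δ_A hδ h
end

section
/- Let N ≥ 1, let A ∈ ℂ^{N,N}, let b ∈ ℝ, and let w ∈ ℂ^N with |w| = 1. Then the minimum over all z ∈ ℂ^N with |z| = 1 of the quantity Re⟨w,Aw⟩ + b·Re⟨w,z⟩·Re⟨z,Aw⟩ exists and equals (1 + b/2)·Re⟨w,Aw⟩ − (|b|/2)·|Aw|. -/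
section RealInnerProductSpace

variable {F : Type*} [NormedAddCommGroup F] [InnerProductSpace ℝ F]

open scoped RealInnerProductSpace

lemma norm_two_inner_smul_sub {w z : F} (hw : ‖w‖ = 1) (hz : ‖z‖ = 1) :
    ‖(2 * ⟪w, z⟫) • z - w‖ = 1 := by
  have h : ‖(2 * ⟪w, z⟫) • z - w‖ ^ 2 = 1 := by
    rw [norm_sub_sq_real, real_inner_smul_left, norm_smul, real_inner_comm, hw, hz,
      Real.norm_eq_abs, mul_one, sq_abs]
    ring
  rwa [pow_eq_one_iff_of_nonneg (norm_nonneg _) two_ne_zero] at h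

lemma abs_two_inner_mul_inner_sub_le {w z : F} (u : F) (hw : ‖w‖ = 1) (hz : ‖z‖ = 1) :
    |2 * (⟪w, z⟫ * ⟪z, u⟫) - ⟪w, u⟫| ≤ ‖u‖ := by
  have h : 2 * (⟪w, z⟫ * ⟪z, u⟫) - ⟪w, u⟫ = ⟪(2 * ⟪w, z⟫) • z - w, u⟫ := by
    rw [inner_sub_left, real_inner_smul_left]; ring
  simpa [h, norm_two_inner_smul_sub hw hz] using abs_real_inner_le_norm ((2 * ⟪w, z⟫) • z - w) u

lemma exists_two_inner_mul_inner_eq_add_norm {w v : F} (u : F) (hw : ‖w‖ = 1) (hv : ‖v‖ = 1)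
    (hwv : ⟪w, v⟫ = 0) : ∃ z : F, ‖z‖ = 1 ∧ 2 * (⟪w, z⟫ * ⟪z, u⟫) = ⟪w, u⟫ + ‖u‖ := by
  set y := ‖u‖ • w + u with hy_def
  have hwy : ⟪w, y⟫ = ‖u‖ + ⟪w, u⟫ := by
    rw [inner_add_right, real_inner_smul_right, real_inner_self_eq_norm_sq, hw]; ring
  by_cases hy : y = 0
  · rw [hy, inner_zero_right] at hwy
    exact ⟨v, hv, by rw [hwv]; linarith⟩
  · have hyu : ⟪y, u⟫ = ‖u‖ * (‖u‖ + ⟪w, u⟫) := by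
      rw [inner_add_left, real_inner_smul_left, real_inner_self_eq_norm_sq]; ring
    have hyy : ‖y‖ ^ 2 = 2 * ‖u‖ * (‖u‖ + ⟪w, u⟫) := by
      rw [← real_inner_self_eq_norm_sq]
      nth_rewrite 1 [hy_def]
      rw [inner_add_left, real_inner_smul_left, hwy, real_inner_comm y u, hyu]
      ring
    refine ⟨‖y‖⁻¹ • y, norm_smul_inv_norm hy, ?_⟩
    rw [real_inner_smul_right, real_inner_smul_left, hwy, hyu]
    field_simp
    rw [hyy]
    ring

theorem isLeast_inner_add_mul_inner_mul_inner {w v : F} (u : F) (b : ℝ) (hw : ‖w‖ = 1)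
    (hv : ‖v‖ = 1) (hwv : ⟪w, v⟫ = 0) :
    IsLeast {x : ℝ | ∃ z : F, ‖z‖ = 1 ∧ x = ⟪w, u⟫ + b * (⟪w, z⟫ * ⟪z, u⟫)}
      ((1 + b / 2) * ⟪w, u⟫ - |b| / 2 * ‖u‖) := by
  refine ⟨?_, ?_⟩
  · rcases le_or_gt 0 b with hb | hb
    · obtain ⟨z, hz, hzu⟩ := exists_two_inner_mul_inner_eq_add_norm (-u) hw hv hwv
      simp only [inner_neg_right, norm_neg] at hzu
      exact ⟨z, hz, by rw [abs_of_nonneg hb]; linear_combination (b / 2) * hzu⟩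
    · obtain ⟨z, hz, hzu⟩ := exists_two_inner_mul_inner_eq_add_norm u hw hv hwv
      exact ⟨z, hz, by rw [abs_of_neg hb]; linear_combination (-b / 2) * hzu⟩
  · rintro x ⟨z, hz, rfl⟩
    set d := 2 * (⟪w, z⟫ * ⟪z, u⟫) - ⟪w, u⟫
    have hd : -(|b| * ‖u‖) ≤ b * d := calc
      -(|b| * ‖u‖) ≤ -(|b| * |d|) := by gcongr; exact abs_two_inner_mul_inner_sub_le u hw hz
      _ = -|b * d| := by rw [abs_mul]
      _ ≤ b * d := neg_abs_le _
    linarith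

end RealInnerProductSpace

theorem stmt_10_general {N : ℕ} (A : Matrix (Fin N) (Fin N) ℂ) (b : ℝ)
    (w : EuclideanSpace ℂ (Fin N)) (hw : ‖w‖ = 1) :
    IsLeast {x : ℝ | ∃ z : EuclideanSpace ℂ (Fin N), ‖z‖ = 1 ∧
        x = (inner ℂ w (mulE A w) : ℂ).re
          + b * ((inner ℂ w z : ℂ).re * (inner ℂ z (mulE A w) : ℂ).re)}
      ((1 + b / 2) * (inner ℂ w (mulE A w) : ℂ).re - (|b| / 2) * ‖mulE A w‖) := by
  -- `Re ⟨·, ·⟩` itself, rather than the componentwise real structure of `PiLp`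
  let _ := InnerProductSpace.rclikeToReal ℂ (EuclideanSpace ℂ (Fin N))
  have hIw : ‖Complex.I • w‖ = 1 := by rw [norm_smul, Complex.norm_I, hw, one_mul]
  exact isLeast_inner_add_mul_inner_mul_inner (mulE A w) b hw hIw (real_inner_I_smul_self ℂ w)

/-- For a unit vector `w`, the minimum over unit vectors `z` of
`Re⟨w,Aw⟩ + b·Re⟨w,z⟩·Re⟨z,Aw⟩` exists and equals `(1 + b/2)·Re⟨w,Aw⟩ − (|b|/2)·|Aw|`. -/
theorem stmt_10 {N : ℕ} (hN : 1 ≤ N) (A : Matrix (Fin N) (Fin N) ℂ) (b : ℝ)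
    (w : EuclideanSpace ℂ (Fin N)) (hw : ‖w‖ = 1) :
    IsLeast {x : ℝ | ∃ z : EuclideanSpace ℂ (Fin N), ‖z‖ = 1 ∧
        x = (inner ℂ w (mulE A w) : ℂ).re
          + b * ((inner ℂ w z : ℂ).re * (inner ℂ z (mulE A w) : ℂ).re)}
      ((1 + b / 2) * (inner ℂ w (mulE A w) : ℂ).re - (|b| / 2) * ‖mulE A w‖) :=
  stmt_10_general A b w hw
end

section
/- Let N ≥ 1 and let A ∈ ℂ^{N,N} be Hermitian positive definite with smallest eigenvalue λ₁ > 0 and largest eigenvalue λ_N. Then μ₁(A) = √(λ₁·λ_N) / ((λ₁ + λ_N)/2), i.e. the first antieigenvalue of A equals the quotient of the geometric mean and the arithmetic mean of the smallest and largest eigenvalues of A. -/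
/-!
Expanding `w` in an orthonormal eigenbasis of `A`, every eigenvalue `λ ∈ [λ₁, λ_N]` satisfies
`(λ - λ₁)(λ - λ_N) ≤ 0`, which sums to `|Aw|² + λ₁λ_N|w|² ≤ (λ₁ + λ_N)⟨w, Aw⟩`. By AM-GM the left
side is at least `2√(λ₁λ_N)|w||Aw|`, giving the lower bound. Equality holds for
`w = √λ_N u₁ + √λ₁ u_N` with orthonormal eigenvectors `u₁, u_N` for `λ₁, λ_N`
(or for any eigenvector when `λ₁ = λ_N`).
-/

open scoped InnerProductSpace ComplexOrder
open RCLike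

theorem sqrt_mul_div_half_add_le_div {m M a c r : ℝ} (hm : 0 < m) (hM : 0 < M) (ha : 0 < a)
    (hc : 0 < c) (h : c ^ 2 + m * M * a ^ 2 ≤ (m + M) * r) :
    √(m * M) / ((m + M) / 2) ≤ r / (a * c) := by
  have hs : √(m * M) ^ 2 = m * M := Real.sq_sqrt (by positivity)
  have amgm : 2 * √(m * M) * (a * c) ≤ c ^ 2 + m * M * a ^ 2 := by
    nlinarith [sq_nonneg (√(m * M) * a - c)]
  rw [div_le_div_iff₀ (by positivity) (by positivity)]
  linarith

variable {𝕜 E ι : Type*} [RCLike 𝕜] [NormedAddCommGroup E] [InnerProductSpace 𝕜 E] [Fintype ι]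

section Eigenbasis

variable {T : E →ₗ[𝕜] E} {b : OrthonormalBasis ι 𝕜 E} {μ : ι → ℝ}

theorem OrthonormalBasis.inner_apply_of_apply_eq_smul (hT : ∀ i, T (b i) = (μ i : 𝕜) • b i)
    (i : ι) (x : E) : ⟪b i, T x⟫_𝕜 = μ i * ⟪b i, x⟫_𝕜 := by
  classical
  conv_lhs => rw [← b.sum_repr' x]
  simp [hT, inner_sum, inner_smul_right, b.inner_eq_ite, mul_comm]

theorem OrthonormalBasis.re_inner_apply_self_of_apply_eq_smul
    (hT : ∀ i, T (b i) = (μ i : 𝕜) • b i) (x : E) :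
    re ⟪x, T x⟫_𝕜 = ∑ i, μ i * ‖⟪b i, x⟫_𝕜‖ ^ 2 := by
  rw [← b.sum_inner_mul_inner, map_sum]
  refine Finset.sum_congr rfl fun i _ => ?_
  rw [b.inner_apply_of_apply_eq_smul hT, ← inner_conj_symm, mul_left_comm, RCLike.conj_mul,
    ← ofReal_pow, ← ofReal_mul, ofReal_re]

theorem OrthonormalBasis.norm_apply_sq_of_apply_eq_smul
    (hT : ∀ i, T (b i) = (μ i : 𝕜) • b i) (x : E) :
    ‖T x‖ ^ 2 = ∑ i, μ i ^ 2 * ‖⟪b i, x⟫_𝕜‖ ^ 2 := by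
  simp [← b.sum_sq_norm_inner_right (T x), b.inner_apply_of_apply_eq_smul hT, mul_pow]

theorem OrthonormalBasis.norm_apply_sq_add_le_of_apply_eq_smul
    (hT : ∀ i, T (b i) = (μ i : 𝕜) • b i) {m M : ℝ} (hm : ∀ i, m ≤ μ i) (hM : ∀ i, μ i ≤ M)
    (x : E) : ‖T x‖ ^ 2 + m * M * ‖x‖ ^ 2 ≤ (m + M) * re ⟪x, T x⟫_𝕜 := by
  rw [b.re_inner_apply_self_of_apply_eq_smul hT, b.norm_apply_sq_of_apply_eq_smul hT,
    ← b.sum_sq_norm_inner_right x, Finset.mul_sum, Finset.mul_sum, ← Finset.sum_add_distrib]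
  refine Finset.sum_le_sum fun i _ => ?_
  nlinarith [mul_nonneg (mul_nonneg (sub_nonneg.2 (hM i)) (sub_nonneg.2 (hm i)))
    (sq_nonneg ‖⟪b i, x⟫_𝕜‖)]

end Eigenbasis

section Eigenvectors

variable {T : E →ₗ[𝕜] E} {u v : E} {m M : ℝ}

theorem re_inner_apply_self_div_eq_one_of_apply_eq_smul (hu : u ≠ 0) (hm : 0 < m)
    (hTu : T u = (m : 𝕜) • u) : re ⟪u, T u⟫_𝕜 / (‖u‖ * ‖T u‖) = 1 := by
  have hu' : 0 < ‖u‖ := norm_pos_iff.2 hu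
  rw [hTu, inner_smul_right, inner_self_eq_norm_sq_to_K, norm_smul, norm_ofReal,
    abs_of_pos hm, ← ofReal_pow, ← ofReal_mul, ofReal_re]
  field_simp

theorem inner_ofReal_smul_add_ofReal_smul (hu : ‖u‖ = 1) (hv : ‖v‖ = 1) (huv : ⟪u, v⟫_𝕜 = 0)
    (a b c d : ℝ) :
    ⟪(a : 𝕜) • u + (b : 𝕜) • v, (c : 𝕜) • u + (d : 𝕜) • v⟫_𝕜 = ((a * c + b * d : ℝ) : 𝕜) := by
  have hvu : ⟪v, u⟫_𝕜 = 0 := by rw [← inner_conj_symm, huv, map_zero]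
  simp only [inner_add_left, inner_add_right, inner_smul_left, inner_smul_right,
    inner_self_eq_norm_sq_to_K, hu, hv, huv, hvu, conj_ofReal]
  push_cast
  ring

theorem norm_ofReal_smul_add_ofReal_smul (hu : ‖u‖ = 1) (hv : ‖v‖ = 1) (huv : ⟪u, v⟫_𝕜 = 0)
    (a b : ℝ) : ‖(a : 𝕜) • u + (b : 𝕜) • v‖ ^ 2 = a ^ 2 + b ^ 2 := by
  rw [← inner_self_eq_norm_sq (𝕜 := 𝕜), inner_ofReal_smul_add_ofReal_smul hu hv huv, ofReal_re]
  ring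

theorem re_inner_apply_self_div_eq_of_apply_eq_smul (hu : ‖u‖ = 1) (hv : ‖v‖ = 1)
    (huv : ⟪u, v⟫_𝕜 = 0) (hm : 0 < m) (hM : 0 < M) (hTu : T u = (m : 𝕜) • u)
    (hTv : T v = (M : 𝕜) • v) :
    let w := ((√M : ℝ) : 𝕜) • u + ((√m : ℝ) : 𝕜) • v
    w ≠ 0 ∧ T w ≠ 0 ∧ √(m * M) / ((m + M) / 2) = re ⟪w, T w⟫_𝕜 / (‖w‖ * ‖T w‖) := by
  intro w
  have hTw : T w = ((√M * m : ℝ) : 𝕜) • u + ((√m * M : ℝ) : 𝕜) • v := by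
    simp only [w, map_add, map_smul, hTu, hTv, smul_smul, ofReal_mul]
  have hsm := Real.sq_sqrt hm.le
  have hsM := Real.sq_sqrt hM.le
  have hw : ‖w‖ ^ 2 = m + M := by
    rw [norm_ofReal_smul_add_ofReal_smul hu hv huv, hsm, hsM, add_comm]
  have hTw2 : ‖T w‖ ^ 2 = (m * M) * (m + M) := by
    rw [hTw, norm_ofReal_smul_add_ofReal_smul hu hv huv]
    linear_combination m ^ 2 * hsM + M ^ 2 * hsm
  have hre : re ⟪w, T w⟫_𝕜 = 2 * (m * M) := by
    rw [hTw, inner_ofReal_smul_add_ofReal_smul hu hv huv, ofReal_re]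
    linear_combination m * hsM + M * hsm
  have hwpos : 0 < ‖w‖ := by nlinarith [norm_nonneg w]
  have hTwpos : 0 < ‖T w‖ := by nlinarith [norm_nonneg (T w), mul_pos hm hM]
  refine ⟨norm_pos_iff.1 hwpos, norm_pos_iff.1 hTwpos, ?_⟩
  have hprod : ‖w‖ * ‖T w‖ = (m + M) * √(m * M) := by
    rw [← Real.sqrt_sq (by positivity : 0 ≤ ‖w‖ * ‖T w‖), mul_pow, hw, hTw2,
      show (m + M) * (m * M * (m + M)) = (m + M) ^ 2 * (m * M) by ring,
      Real.sqrt_mul (sq_nonneg _), Real.sqrt_sq (by positivity)]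
  have hs : √(m * M) ^ 2 = m * M := Real.sq_sqrt (by positivity)
  rw [hre, hprod, div_eq_div_iff (by positivity) (by positivity)]
  linear_combination (m + M) * hs

end Eigenvectors

theorem OrthonormalBasis.isLeast_re_inner_apply_self_div (b : OrthonormalBasis ι 𝕜 E)
    {T : E →ₗ[𝕜] E} {μ : ι → ℝ} (hT : ∀ i, T (b i) = (μ i : 𝕜) • b i) {m M : ℝ} (hm : 0 < m)
    (hmin : IsLeast (Set.range μ) m) (hmax : IsGreatest (Set.range μ) M) :
    IsLeast {r : ℝ | ∃ w : E, w ≠ 0 ∧ T w ≠ 0 ∧ r = re ⟪w, T w⟫_𝕜 / (‖w‖ * ‖T w‖)}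
      (√(m * M) / ((m + M) / 2)) := by
  obtain ⟨i, hi⟩ := hmin.1
  obtain ⟨j, hj⟩ := hmax.1
  have hM : 0 < M := hm.trans_le (hmax.2 hmin.1)
  constructor
  · rcases eq_or_ne m M with rfl | hmM
    · refine ⟨b i, b.orthonormal.ne_zero i, ?_, ?_⟩
      · rw [hT i, hi]
        exact smul_ne_zero (ofReal_ne_zero.2 hm.ne') (b.orthonormal.ne_zero i)
      · rw [re_inner_apply_self_div_eq_one_of_apply_eq_smul (b.orthonormal.ne_zero i) hm
          (hi ▸ hT i), Real.sqrt_mul_self hm.le, add_self_div_two, div_self hm.ne']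
    · have hij : i ≠ j := fun h => hmM (hi ▸ hj ▸ congrArg μ h)
      exact ⟨_, re_inner_apply_self_div_eq_of_apply_eq_smul (b.orthonormal.1 i)
        (b.orthonormal.1 j) (b.orthonormal.2 hij) hm hM (hi ▸ hT i) (hj ▸ hT j)⟩
  · rintro _ ⟨w, hw, hTw, rfl⟩
    exact sqrt_mul_div_half_add_le_div hm hM (norm_pos_iff.2 hw) (norm_pos_iff.2 hTw)
      (b.norm_apply_sq_add_le_of_apply_eq_smul hT (fun k => hmin.2 ⟨k, rfl⟩)
        (fun k => hmax.2 ⟨k, rfl⟩) w)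

theorem Matrix.IsHermitian.toEuclideanLin_eigenvectorBasis {n : Type*} [Fintype n]
    [DecidableEq n] {A : Matrix n n 𝕜} (hA : A.IsHermitian) (i : n) :
    Matrix.toEuclideanLin A (hA.eigenvectorBasis i) =
      (hA.eigenvalues i : 𝕜) • hA.eigenvectorBasis i := by
  rw [Matrix.toLpLin_apply, hA.mulVec_eigenvectorBasis, RCLike.real_smul_eq_coe_smul (K := 𝕜)]
  rfl

theorem Matrix.IsHermitian.setOf_ofReal_mem_spectrum {n : Type*} [Fintype n] [DecidableEq n]
    {A : Matrix n n 𝕜} (hA : A.IsHermitian) :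
    {x : ℝ | (x : 𝕜) ∈ spectrum 𝕜 A} = Set.range hA.eigenvalues := by
  rw [← hA.spectrum_real_eq_range_eigenvalues]
  exact Set.ext fun x => spectrum.algebraMap_mem_iff 𝕜

theorem stmt_15_general {N : ℕ} (A : Matrix (Fin N) (Fin N) ℂ)
    (hHerm : A.IsHermitian) (lam1 lamN : ℝ) (hlam1 : 0 < lam1)
    (hleast : IsLeast {x : ℝ | (x : ℂ) ∈ spectrum ℂ A} lam1)
    (hgreatest : IsGreatest {x : ℝ | (x : ℂ) ∈ spectrum ℂ A} lamN) :
    mu1 A = Real.sqrt (lam1 * lamN) / ((lam1 + lamN) / 2) := by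
  have hspec : {x : ℝ | (x : ℂ) ∈ spectrum ℂ A} = Set.range hHerm.eigenvalues :=
    hHerm.setOf_ofReal_mem_spectrum
  rw [hspec] at hleast hgreatest
  exact (hHerm.eigenvectorBasis.isLeast_re_inner_apply_self_div
    hHerm.toEuclideanLin_eigenvectorBasis hlam1 hleast hgreatest).csInf_eq

/-- For a Hermitian positive definite matrix `A` with smallest eigenvalue `λ₁ > 0` and
largest eigenvalue `λ_N`, the first antieigenvalue equals the quotient of the geometric
mean and the arithmetic mean of `λ₁` and `λ_N`. -/
theorem stmt_15 {N : ℕ} (hN : 1 ≤ N) (A : Matrix (Fin N) (Fin N) ℂ)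
    (hHerm : A.IsHermitian) (hPD : A.PosDef) (lam1 lamN : ℝ) (hlam1 : 0 < lam1)
    (hleast : IsLeast {x : ℝ | (x : ℂ) ∈ spectrum ℂ A} lam1)
    (hgreatest : IsGreatest {x : ℝ | (x : ℂ) ∈ spectrum ℂ A} lamN) :
    mu1 A = Real.sqrt (lam1 * lamN) / ((lam1 + lamN) / 2) :=
  stmt_15_general A hHerm lam1 lamN hlam1 hleast hgreatest
end
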